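/- arXiv:1005.4243 — 2 statements merged into one kernel-verified Lean document; each statement's English description precedes it below -/
import Mathlib

section
/- Let A be a complete normed ring (Banach algebra) over ℝ with 1. Suppose p : ℝ → A is differentiable with all values units of A, p(0) = 1, and the logarithmic derivative t ↦ p(t)⁻¹·p′(t) is 2π-periodic. Then p(t + 2π) = p(2π)·p(t) for all t ∈ ℝ. -/
open Real

/-- If `p : ℝ → A` is a differentiable unit-valued map into a real Banach algebra with
`p 0 = 1` whose logarithmic derivative `t ↦ p t ⁻¹ * p' t` is `2π`-periodic, then
`p` is quasi-periodic: `p (t + 2π) = p (2π) * p t` for all `t`. -/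
theorem quasi_periodic_of_periodic_log_deriv {A : Type*}
    [NormedRing A] [NormedAlgebra ℝ A] [CompleteSpace A]
    (p : ℝ → A) (hp : Differentiable ℝ p) (hpu : ∀ t, IsUnit (p t)) (hp0 : p 0 = 1)
    (hper : Function.Periodic (fun t => Ring.inverse (p t) * deriv p t) (2 * π)) :
    ∀ t, p (t + 2 * π) = p (2 * π) * p t := by
  set g : ℝ → A := fun s => p (s + 2 * π) * Ring.inverse (p s) with hg
  have key : ∀ t, HasDerivAt g 0 t := by
    intro t
    have h1 : HasDerivAt (fun s => p (s + 2 * π)) (deriv p (t + 2 * π)) t := by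
      exact (hp (t + 2 * π)).hasDerivAt.comp_add_const t (2 * π)
    have hinv : HasDerivAt (fun s => Ring.inverse (p s))
        (-(Ring.inverse (p t) * deriv p t * Ring.inverse (p t))) t := by
      have hf := hasFDerivAt_ringInverse (𝕜 := ℝ) (hpu t).unit
      rw [(hpu t).unit_spec] at hf
      have := hf.comp_hasDerivAt t (hp t).hasDerivAt
      simpa [Function.comp_def, ← Ring.inverse_unit, (hpu t).unit_spec,
        ContinuousLinearMap.mulLeftRight_apply] using this
    have hmul := h1.mul hinv
    have hd : deriv p (t + 2 * π) = p (t + 2 * π) * (Ring.inverse (p t) * deriv p t) := by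
      have h := hper t
      simp only at h
      calc deriv p (t + 2 * π)
          = p (t + 2 * π) * (Ring.inverse (p (t + 2 * π)) * deriv p (t + 2 * π)) := by
            rw [← mul_assoc, Ring.mul_inverse_cancel _ (hpu _), one_mul]
        _ = p (t + 2 * π) * (Ring.inverse (p t) * deriv p t) := by rw [h]
    have : deriv p (t + 2 * π) * Ring.inverse (p t) +
        p (t + 2 * π) * -(Ring.inverse (p t) * deriv p t * Ring.inverse (p t)) = 0 := by
      rw [hd]; noncomm_ring
    rw [this] at hmul
    exact hmul
  have hdiff : Differentiable ℝ g := fun t => (key t).differentiableAt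
  have hconst : ∀ t, g t = g 0 := fun t =>
    is_const_of_deriv_eq_zero hdiff (fun x => (key x).deriv) t 0
  intro t
  have h := hconst t
  simp only [hg, hp0, zero_add, Ring.inverse_one, mul_one] at h
  have := congrArg (· * p t) h
  simpa [mul_assoc, Ring.inverse_mul_cancel _ (hpu t)] using this
end

section
/- Let A be a complete normed ring (Banach algebra) over ℝ with 1. Let PG denote the set of differentiable maps p : ℝ → A all of whose values are units, with p(0) = 1 and whose logarithmic derivative t ↦ p(t)⁻¹·p′(t) is 2π-periodic; let ΩG denote the set of differentiable 2π-periodic maps γ : ℝ → A all of whose values are units, with γ(0) = 1. Then for every p ∈ PG, γ ∈ ΩG and every unit g of A, the map θ ↦ g⁻¹·p(θ)·g·γ(θ) again belongs to PG. -/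
open Real

variable (A : Type*) [NormedRing A] [NormedAlgebra ℝ A] [CompleteSpace A]

/-- Membership in the path space `PG`: differentiable unit-valued maps `p : ℝ → A` with
`p 0 = 1` whose logarithmic derivative `t ↦ p t ⁻¹ * p' t` is `2π`-periodic. -/
def MemPG (p : ℝ → A) : Prop :=
  Differentiable ℝ p ∧ (∀ t, IsUnit (p t)) ∧ p 0 = 1 ∧
    Function.Periodic (fun t => Ring.inverse (p t) * deriv p t) (2 * π)

/-- Membership in the based loop group `ΩG`: differentiable `2π`-periodic unit-valued maps
`γ : ℝ → A` with `γ 0 = 1`. -/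
def MemOmegaG (γ : ℝ → A) : Prop :=
  Differentiable ℝ γ ∧ Function.Periodic γ (2 * π) ∧ (∀ t, IsUnit (γ t)) ∧ γ 0 = 1

/-!
The left logarithmic derivative `L q = q⁻¹ q'` satisfies `L (g⁻¹ p g) = g⁻¹ (L p) g` for a constant
unit `g` and the twisted Leibniz rule `L (p γ) = γ⁻¹ (L p) γ + L γ`. For a loop `γ` the functions
`γ`, `γ'` and `L γ` are `2π`-periodic, so `L (g⁻¹ p g γ)` is periodic as soon as `L p` is.
-/

open scoped Ring

theorem Function.Periodic.deriv {𝕜 F : Type*} [NontriviallyNormedField 𝕜] [NormedAddCommGroup F]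
    [NormedSpace 𝕜 F] {f : 𝕜 → F} {c : 𝕜} (hf : Function.Periodic f c) :
    Function.Periodic (deriv f) c := fun x => by
  rw [← deriv_comp_add_const, show (fun y => f (y + c)) = f from funext hf]

section LeftLogDeriv

variable {𝕜 𝔸 : Type*} [NontriviallyNormedField 𝕜] [NormedRing 𝔸] [NormedAlgebra 𝕜 𝔸]

noncomputable def leftLogDeriv (p : 𝕜 → 𝔸) (t : 𝕜) : 𝔸 :=
  (p t)⁻¹ʳ * deriv p t

variable {p q : 𝕜 → 𝔸} {t : 𝕜}

theorem Function.Periodic.leftLogDeriv {c : 𝕜} (hp : Function.Periodic p c) :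
    Function.Periodic (leftLogDeriv p) c := fun t => by
  rw [_root_.leftLogDeriv, _root_.leftLogDeriv, hp t, hp.deriv t]

theorem leftLogDeriv_mul (hp : DifferentiableAt 𝕜 p t) (hq : DifferentiableAt 𝕜 q t)
    (hpu : IsUnit (p t)) :
    leftLogDeriv (fun θ => p θ * q θ) t = (q t)⁻¹ʳ * leftLogDeriv p t * q t + leftLogDeriv q t := by
  have hinv : (p t)⁻¹ʳ * p t = 1 := Ring.inverse_mul_cancel _ hpu
  simp only [leftLogDeriv, deriv_fun_mul hp hq, Ring.inverse_mul (Or.inl hpu), mul_add, mul_assoc]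
  rw [← mul_assoc (p t)⁻¹ʳ (p t), hinv, one_mul]

theorem leftLogDeriv_units_conj (g : 𝔸ˣ) (hp : DifferentiableAt 𝕜 p t) :
    leftLogDeriv (fun θ => ↑g⁻¹ * p θ * ↑g) t = ↑g⁻¹ * leftLogDeriv p t * ↑g := by
  have hderiv : deriv (fun θ => ↑g⁻¹ * p θ * ↑g) t = ↑g⁻¹ * deriv p t * ↑g := by
    rw [deriv_mul_const (hp.const_mul _), deriv_const_mul _ hp]
  rw [leftLogDeriv, hderiv, Ring.inverse_mul (Or.inr g.isUnit),
    Ring.inverse_mul (Or.inl g⁻¹.isUnit), Ring.inverse_unit, Ring.inverse_unit, inv_inv,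
    leftLogDeriv]
  simp only [mul_assoc, Units.mul_inv_cancel_left]

end LeftLogDeriv

/-- The action `(p, g, γ) ↦ (θ ↦ g⁻¹ p(θ) g γ(θ))` of `ΩG ⋊ G` preserves the path space
`PG`: this is the well-definedness of the `ΩG ⋊ G` action on `PG × EG`. -/
theorem memPG_conj_action (p γ : ℝ → A) (hp : MemPG A p) (hγ : MemOmegaG A γ) (g : Aˣ) :
    MemPG A (fun θ => ↑g⁻¹ * p θ * ↑g * γ θ) := by
  obtain ⟨hpd, hpu, hp0, hpp⟩ := hp
  obtain ⟨hγd, hγp, hγu, hγ0⟩ := hγ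
  have hLp : Function.Periodic (leftLogDeriv p) (2 * π) := hpp
  have hconjd : Differentiable ℝ (fun θ => ↑g⁻¹ * p θ * ↑g) :=
    (hpd.const_mul _).mul_const _
  have hconju : ∀ t, IsUnit (↑g⁻¹ * p t * ↑g) := fun t =>
    (g⁻¹.isUnit.mul (hpu t)).mul g.isUnit
  have hlog : ∀ t, leftLogDeriv (fun θ => ↑g⁻¹ * p θ * ↑g * γ θ) t =
      (γ t)⁻¹ʳ * (↑g⁻¹ * leftLogDeriv p t * ↑g) * γ t + leftLogDeriv γ t := fun t => by
    rw [leftLogDeriv_mul (hconjd t) (hγd t) (hconju t), leftLogDeriv_units_conj g (hpd t)]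
  refine ⟨hconjd.mul hγd, fun t => (hconju t).mul (hγu t), by simp [hp0, hγ0], fun t => ?_⟩
  change leftLogDeriv (fun θ => ↑g⁻¹ * p θ * ↑g * γ θ) (t + 2 * π) =
    leftLogDeriv (fun θ => ↑g⁻¹ * p θ * ↑g * γ θ) t
  rw [hlog, hlog, hγp t, hγp.leftLogDeriv t, hLp t]
end
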